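/- Let A be a locally C*-algebra with topology given by a directed family of continuous C*-seminorms S(A), and let Φ : A → L_B(E) be a continuous *-homomorphism into the adjointable operators on a Hilbert module E over a C*-algebra B. Then there exists p ∈ S(A) with ‖Φ(a)‖ ≤ p(a) for all a ∈ A, and hence Φ factors as Φ = Φ_p ∘ π_p through a *-homomorphism Φ_p : A_p → L_B(E), where A_p = A/ker p is the C*-completion at p and π_p : A → A_p the quotient map. -/

import Mathlib

/-!
Continuity of `Φ` at `0` yields a seminorm `p = S i` and `ε > 0` with `p a < ε → ‖Φ a‖ < 1`, hence
`‖Φ a‖ ≤ ε⁻¹ * p a` by homogeneity. Both `a ↦ ‖Φ a‖` (by the Cauchy–Schwarz inequality in `E`) and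
`p` satisfy the C*-inequality `q a ^ 2 ≤ q (a⋆a)`, with equality for `p`, so iterated squaring of
self-adjoint elements removes the constant: `‖Φ a‖ ≤ p a`. In particular `Φ` vanishes on `ker p`
and descends to `A_p`.
-/

universe u

/-- A C*-seminorm on a topological *-algebra. -/
def IsCStarSeminorm {A : Type*} [NonUnitalRing A] [StarRing A] [Module ℂ A]
    (p : A → ℝ) : Prop :=
  (∀ a, 0 ≤ p a) ∧ (∀ a b, p (a + b) ≤ p a + p b) ∧ (∀ (c : ℂ) (a), p (c • a) = ‖c‖ * p a) ∧
    (∀ a b, p (a * b) ≤ p a * p b) ∧ (∀ a, p (star a) = p a) ∧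
    (∀ a, p (star a * a) = p a ^ 2)

/-- The Hilbert C*-module class as it stood in Mathlib of December 2024 (right module,
via `SMul Aᵐᵒᵖ E`); Mathlib's `CStarModule` now uses left modules. -/
class CStarModuleOld (A : outParam <| Type*) (E : Type*) [NonUnitalSemiring A] [StarRing A]
    [Module ℂ A] [AddCommGroup E] [Module ℂ E] [PartialOrder A] [SMul Aᵐᵒᵖ E] [Norm A] [Norm E]
    extends Inner A E where
  inner_add_right {x} {y} {z} : inner x (y + z) = inner x y + inner x z
  inner_self_nonneg {x} : 0 ≤ inner x x
  inner_self {x} : inner x x = 0 ↔ x = 0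
  inner_op_smul_right {a : A} {x y : E} : inner x (MulOpposite.op a • y) = inner x y * a
  inner_smul_right_complex {z : ℂ} {x} {y} : inner x (z • y) = z • inner x y
  star_inner x y : star (inner x y) = inner y x
  norm_eq_sqrt_norm_inner_self x : ‖x‖ = √‖inner x x‖

namespace CStarModuleOld

variable {B E : Type*} [NonUnitalCStarAlgebra B] [PartialOrder B]
  [NormedAddCommGroup E] [NormedSpace ℂ E] [SMul Bᵐᵒᵖ E] [CStarModuleOld B E]

local notation "⟪" x ", " y "⟫" => inner B x y

lemma norm_sq_eq (x : E) : ‖x‖ ^ 2 = ‖⟪x, x⟫‖ := by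
  rw [norm_eq_sqrt_norm_inner_self x, Real.sq_sqrt (norm_nonneg _)]

def innerRight (x : E) : E →+ B :=
  AddMonoidHom.mk' (fun y => ⟪x, y⟫) fun _ _ => inner_add_right

lemma inner_zero_left (y : E) : ⟪(0 : E), y⟫ = 0 := by
  rw [← star_inner y, show ⟪y, (0 : E)⟫ = 0 from map_zero (innerRight y), star_zero]

lemma inner_sub_right (x y z : E) : ⟪x, y - z⟫ = ⟪x, y⟫ - ⟪x, z⟫ :=
  map_sub (innerRight x) y z

lemma inner_sub_left (x y z : E) : ⟪x - y, z⟫ = ⟪x, z⟫ - ⟪y, z⟫ := by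
  rw [← star_inner z, inner_sub_right, star_sub, star_inner, star_inner]

lemma inner_op_smul_left (a : B) (x y : E) : ⟪MulOpposite.op a • x, y⟫ = star a * ⟪x, y⟫ := by
  rw [← star_inner y, inner_op_smul_right, star_mul, star_inner]

lemma inner_smul_right_real (r : ℝ) (x y : E) : ⟪x, r • y⟫ = r • ⟪x, y⟫ := by
  rw [← Complex.coe_smul, inner_smul_right_complex, Complex.coe_smul]

lemma inner_smul_left_real (r : ℝ) (x y : E) : ⟪r • x, y⟫ = r • ⟪x, y⟫ := by
  rw [← star_inner y, inner_smul_right_real, star_smul, star_trivial, star_inner]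

variable [StarOrderedRing B]

-- Expand `0 ≤ ⟪a x - r y, a x - r y⟫` with `a = ⟪x, y⟫` and `r = ‖x‖ ^ 2`.
lemma star_inner_mul_inner_le (x y : E) : star ⟪x, y⟫ * ⟪x, y⟫ ≤ ‖x‖ ^ 2 • ⟪y, y⟫ := by
  rcases eq_or_ne x 0 with rfl | hx
  · simp [inner_zero_left]
  set r : ℝ := ‖x‖ ^ 2 with hr_def
  set a : B := ⟪x, y⟫
  have hr : 0 < r := by positivity
  have hsa : star a = ⟪y, x⟫ := star_inner x y
  have hxx : star a * ⟪x, x⟫ * a ≤ r • (star a * a) := by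
    rw [hr_def, norm_sq_eq]
    exact CStarAlgebra.star_left_conjugate_le_norm_smul (star_inner x x)
  have hexp : ⟪MulOpposite.op a • x - r • y, MulOpposite.op a • x - r • y⟫
      = star a * ⟪x, x⟫ * a - r • (star a * a) - r • (star a * a) + r • r • ⟪y, y⟫ := by
    simp only [inner_sub_left, inner_sub_right, inner_op_smul_left, inner_op_smul_right,
      inner_smul_left_real, inner_smul_right_real, ← hsa, sub_mul, smul_sub, smul_mul_assoc,
      mul_assoc]
    abel
  have hpos : (0 : B) ≤ r • (r • ⟪y, y⟫ - star a * a) := by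
    calc (0 : B) ≤ _ := inner_self_nonneg
      _ = _ := hexp
      _ ≤ r • (star a * a) - r • (star a * a) - r • (star a * a) + r • r • ⟪y, y⟫ := by
        gcongr
      _ = r • (r • ⟪y, y⟫ - star a * a) := by rw [smul_sub]; abel
  exact sub_nonneg.mp (nonneg_of_smul_nonneg_of_pos_left hpos hr)

lemma norm_inner_le (x y : E) : ‖⟪x, y⟫‖ ≤ ‖x‖ * ‖y‖ := by
  refine (pow_le_pow_iff_left₀ (norm_nonneg _) (by positivity) two_ne_zero).mp ?_
  calc ‖⟪x, y⟫‖ ^ 2 = ‖star ⟪x, y⟫ * ⟪x, y⟫‖ := by rw [CStarRing.norm_star_mul_self, sq]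
    _ ≤ ‖‖x‖ ^ 2 • ⟪y, y⟫‖ :=
      CStarAlgebra.norm_le_norm_of_nonneg_of_le (star_mul_self_nonneg _)
        (star_inner_mul_inner_le x y)
    _ = (‖x‖ * ‖y‖) ^ 2 := by
      rw [norm_smul, Real.norm_of_nonneg (by positivity), ← norm_sq_eq, mul_pow]

end CStarModuleOld

open CStarModuleOld in
lemma norm_sq_le_norm_star_mul_self {A B E : Type*} [Mul A] [Star A]
    [NonUnitalCStarAlgebra B] [PartialOrder B] [StarOrderedRing B]
    [NormedAddCommGroup E] [NormedSpace ℂ E] [SMul Bᵐᵒᵖ E] [CStarModuleOld B E]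
    {Φ : A → E →L[ℂ] E} (hΦ_mul : ∀ a b : A, Φ (a * b) = (Φ a).comp (Φ b))
    (hΦ_star : ∀ (a : A) (x y : E), inner B (Φ a x) y = inner B x (Φ (star a) y)) (a : A) :
    ‖Φ a‖ ^ 2 ≤ ‖Φ (star a * a)‖ := by
  have hx : ∀ x, ‖Φ a x‖ ≤ √‖Φ (star a * a)‖ * ‖x‖ := fun x => by
    rw [← Real.sqrt_sq (norm_nonneg x), ← Real.sqrt_mul (norm_nonneg _),
      Real.le_sqrt (norm_nonneg _) (by positivity)]
    calc ‖Φ a x‖ ^ 2 = ‖inner B x (Φ (star a * a) x)‖ := by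
          rw [norm_sq_eq, hΦ_star, hΦ_mul, ContinuousLinearMap.comp_apply]
      _ ≤ ‖x‖ * (‖Φ (star a * a)‖ * ‖x‖) :=
          (norm_inner_le _ _).trans (by gcongr; exact (Φ _).le_opNorm x)
      _ = ‖Φ (star a * a)‖ * ‖x‖ ^ 2 := by ring
  exact (Real.le_sqrt (norm_nonneg _) (norm_nonneg _)).mp
    ((Φ a).opNorm_le_bound (Real.sqrt_nonneg _) hx)

lemma norm_le_inv_mul_of_lt_imp_norm_lt_one {A F : Type*} [SMul ℂ A]
    [SeminormedAddCommGroup F] [NormedSpace ℂ F] {p : A → ℝ} (hp0 : ∀ a, 0 ≤ p a)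
    (hp_smul : ∀ (c : ℂ) (a : A), p (c • a) = ‖c‖ * p a) {f : A → F}
    (hf_smul : ∀ (c : ℂ) (a : A), f (c • a) = c • f a) {ε : ℝ} (hε : 0 < ε)
    (h : ∀ a, p a < ε → ‖f a‖ < 1) (a : A) : ‖f a‖ ≤ ε⁻¹ * p a := by
  refine le_of_forall_gt_imp_ge_of_dense fun b hb => ?_
  have hb0 : 0 < b := (mul_nonneg (inv_nonneg.mpr hε.le) (hp0 a)).trans_lt hb
  have hscaled := h (((b⁻¹ : ℝ) : ℂ) • a) (by
    rw [hp_smul, Complex.norm_real, Real.norm_of_nonneg (by positivity),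
      inv_mul_lt_iff₀ hb0]
    rwa [inv_mul_lt_iff₀ hε, mul_comm] at hb)
  rw [hf_smul, norm_smul, Complex.norm_real,
    Real.norm_of_nonneg (by positivity), inv_mul_lt_iff₀ hb0, mul_one] at hscaled
  exact hscaled.le

lemma le_of_forall_pow_two_pow_le_mul {x y M : ℝ} (hy : 0 ≤ y)
    (h : ∀ n : ℕ, x ^ 2 ^ n ≤ M * y ^ 2 ^ n) : x ≤ y := by
  by_contra! hyx
  rcases hy.eq_or_lt with rfl | hy
  · simpa [hyx.not_ge] using h 0
  have hxy : 1 < x / y := (one_lt_div hy).mpr hyx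
  obtain ⟨n, hn⟩ := pow_unbounded_of_one_lt M hxy
  have hM : (x / y) ^ 2 ^ n ≤ M := by
    rw [div_pow, div_le_iff₀ (by positivity)]
    exact h n
  exact (hn.trans_le (pow_le_pow_right₀ hxy.le Nat.lt_two_pow_self.le)).not_ge hM

section SquareIterates

variable {A : Type*} [Mul A] [StarMul A] {b : A}

lemma IsSelfAdjoint.iterate_mul_self (hb : IsSelfAdjoint b) (n : ℕ) :
    IsSelfAdjoint ((fun x => x * x)^[n] b) := by
  induction n with
  | zero => exact hb
  | succ n ih =>
    rw [Function.iterate_succ_apply']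
    simpa only [ih.star_eq] using IsSelfAdjoint.star_mul_self ((fun x => x * x)^[n] b)

lemma apply_iterate_mul_self {p : A → ℝ} (hp : ∀ a, p (star a * a) = p a ^ 2)
    (hb : IsSelfAdjoint b) (n : ℕ) : p ((fun x => x * x)^[n] b) = p b ^ 2 ^ n := by
  induction n with
  | zero => simp
  | succ n ih =>
    have h := hp ((fun x => x * x)^[n] b)
    rw [(hb.iterate_mul_self n).star_eq, ih, ← pow_mul, ← pow_succ] at h
    rwa [Function.iterate_succ_apply']

lemma pow_two_pow_le_apply_iterate_mul_self {q : A → ℝ} (hq0 : ∀ a, 0 ≤ q a)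
    (hq : ∀ a, q a ^ 2 ≤ q (star a * a)) (hb : IsSelfAdjoint b) (n : ℕ) :
    q b ^ 2 ^ n ≤ q ((fun x => x * x)^[n] b) := by
  induction n with
  | zero => simp
  | succ n ih =>
    have h := hq ((fun x => x * x)^[n] b)
    rw [(hb.iterate_mul_self n).star_eq] at h
    rw [Function.iterate_succ_apply', pow_succ, pow_mul]
    exact (pow_le_pow_left₀ (pow_nonneg (hq0 b) _) ih 2).trans h

-- Iterating `b ↦ b * b` on self-adjoint `b` turns the constant `M` into `M ^ (1 / 2 ^ n) → 1`.
lemma le_of_le_mul_of_sq_le_star_mul_self {p q : A → ℝ} (hp0 : ∀ a, 0 ≤ p a)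
    (hp : ∀ a, p (star a * a) = p a ^ 2) (hq0 : ∀ a, 0 ≤ q a)
    (hq : ∀ a, q a ^ 2 ≤ q (star a * a)) {M : ℝ} (hM : ∀ a, q a ≤ M * p a) (a : A) :
    q a ≤ p a := by
  have hsa : ∀ b, IsSelfAdjoint b → q b ≤ p b := fun b hb =>
    le_of_forall_pow_two_pow_le_mul (hp0 b) fun n =>
      calc q b ^ 2 ^ n ≤ q ((fun x => x * x)^[n] b) :=
            pow_two_pow_le_apply_iterate_mul_self hq0 hq hb n
        _ ≤ M * p ((fun x => x * x)^[n] b) := hM _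
        _ = M * p b ^ 2 ^ n := by rw [apply_iterate_mul_self hp hb]
  refine (pow_le_pow_iff_left₀ (hq0 a) (hp0 a) two_ne_zero).mp ?_
  calc q a ^ 2 ≤ q (star a * a) := hq a
    _ ≤ p (star a * a) := hsa _ (.star_mul_self a)
    _ = p a ^ 2 := hp a

end SquareIterates

lemma Function.factorsThrough_of_norm_le {A F G : Type*} [AddGroup A] [NormedAddGroup F]
    [SeminormedAddGroup G] {f : A → F} {g : A → G} (hf_add : ∀ a b, f (a + b) = f a + f b)
    (hg_add : ∀ a b, g (a + b) = g a + g b) (h : ∀ a, ‖f a‖ ≤ ‖g a‖) : f.FactorsThrough g :=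
  fun a b hab => by
    have hf_sub : f (a - b) = f a - f b := map_sub (AddMonoidHom.mk' f hf_add) a b
    have hg_sub : g (a - b) = g a - g b := map_sub (AddMonoidHom.mk' g hg_add) a b
    have := h (a - b)
    rw [hg_sub, hab, sub_self, norm_zero, norm_le_zero_iff, hf_sub, sub_eq_zero] at this
    exact this

lemma exists_star_hom_factor {A Ap B E : Type*} [Add A] [Mul A] [SMul ℂ A] [Star A]
    [Add Ap] [Mul Ap] [SMul ℂ Ap] [Star Ap]
    [NonUnitalCStarAlgebra B] [PartialOrder B]
    [NormedAddCommGroup E] [NormedSpace ℂ E] [SMul Bᵐᵒᵖ E] [CStarModuleOld B E]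
    {π : A → Ap} (hπ : Function.Surjective π)
    (hπ_add : ∀ a b : A, π (a + b) = π a + π b) (hπ_smul : ∀ (c : ℂ) (a : A), π (c • a) = c • π a)
    (hπ_mul : ∀ a b : A, π (a * b) = π a * π b) (hπ_star : ∀ a : A, π (star a) = star (π a))
    {Φ : A → E →L[ℂ] E} (hΦ_add : ∀ a b : A, Φ (a + b) = Φ a + Φ b)
    (hΦ_smul : ∀ (c : ℂ) (a : A), Φ (c • a) = c • Φ a)
    (hΦ_mul : ∀ a b : A, Φ (a * b) = (Φ a).comp (Φ b))
    (hΦ_star : ∀ (a : A) (x y : E), inner B (Φ a x) y = inner B x (Φ (star a) y))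
    (hΦπ : Φ.FactorsThrough π) :
    ∃ Φp : Ap → E →L[ℂ] E,
      (∀ x y : Ap, Φp (x + y) = Φp x + Φp y) ∧
      (∀ (c : ℂ) (x : Ap), Φp (c • x) = c • Φp x) ∧
      (∀ x y : Ap, Φp (x * y) = (Φp x).comp (Φp y)) ∧
      (∀ (x : Ap) (ξ η : E), inner B (Φp x ξ) η = inner B ξ (Φp (star x) η)) ∧
      (∀ a : A, Φ a = Φp (π a)) := by
  set Φp := Function.extend π Φ 0
  have hΦp : ∀ a, Φp (π a) = Φ a := hΦπ.extend_apply 0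
  refine ⟨Φp, hπ.forall₂.2 fun a b => ?_, fun c => hπ.forall.2 fun a => ?_,
    hπ.forall₂.2 fun a b => ?_, hπ.forall.2 fun a => ?_, fun a => (hΦp a).symm⟩
  · rw [← hπ_add, hΦp, hΦp, hΦp, hΦ_add]
  · rw [← hπ_smul, hΦp, hΦp, hΦ_smul]
  · rw [← hπ_mul, hΦp, hΦp, hΦp, hΦ_mul]
  · rw [← hπ_star, hΦp, hΦp]
    exact hΦ_star a

theorem stmt7_general {A : Type u} [NonUnitalRing A] [StarRing A] [Module ℂ A]
    [TopologicalSpace A]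
    {B : Type*} [NonUnitalCStarAlgebra B] [PartialOrder B] [StarOrderedRing B]
    {E : Type*} [NormedAddCommGroup E] [NormedSpace ℂ E] [SMul Bᵐᵒᵖ E] [CStarModuleOld B E]
    {ι : Type*} (S : ι → A → ℝ)
    (hS : ∀ i, IsCStarSeminorm (S i))
    -- the topology of A is determined by the family S
    (hS_top : (nhds (0 : A)).HasBasis (fun p : ι × ℝ => 0 < p.2)
      (fun p => {a : A | S p.1 a < p.2}))
    -- Φ : A → L_B(E) is a continuous *-homomorphism
    (Φ : A → E →L[ℂ] E)
    (hΦ_add : ∀ a b : A, Φ (a + b) = Φ a + Φ b)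
    (hΦ_smul : ∀ (c : ℂ) (a : A), Φ (c • a) = c • Φ a)
    (hΦ_mul : ∀ a b : A, Φ (a * b) = (Φ a).comp (Φ b))
    (hΦ_star : ∀ (a : A) (x y : E),
      inner (𝕜 := B) (Φ a x) y = inner (𝕜 := B) x (Φ (star a) y))
    (hΦ_cont : Continuous Φ) :
    ∃ i : ι, (∀ a : A, ‖Φ a‖ ≤ S i a) ∧
      ∀ (Ap : Type u), ∀ (_ : NonUnitalCStarAlgebra Ap), ∀ (π : A → Ap),
        (∀ a b : A, π (a + b) = π a + π b) →
        (∀ (c : ℂ) (a : A), π (c • a) = c • π a) →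
        (∀ a b : A, π (a * b) = π a * π b) →
        (∀ a : A, π (star a) = star (π a)) →
        Function.Surjective π →
        (∀ a : A, ‖π a‖ = S i a) →
        ∃ Φp : Ap → E →L[ℂ] E,
          (∀ x y : Ap, Φp (x + y) = Φp x + Φp y) ∧
          (∀ (c : ℂ) (x : Ap), Φp (c • x) = c • Φp x) ∧
          (∀ x y : Ap, Φp (x * y) = (Φp x).comp (Φp y)) ∧
          (∀ (x : Ap) (ξ η : E),
            inner (𝕜 := B) (Φp x ξ) η = inner (𝕜 := B) ξ (Φp (star x) η)) ∧
          (∀ a : A, Φ a = Φp (π a)) := by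
  have hΦ0 : Φ 0 = 0 := map_zero (AddMonoidHom.mk' Φ hΦ_add)
  obtain ⟨⟨i, ε⟩, hε, hball⟩ := hS_top.mem_iff.mp <|
    hΦ_cont.continuousAt.preimage_mem_nhds (Metric.ball_mem_nhds (Φ 0) one_pos)
  obtain ⟨hS0, -, hS_smul, -, -, hS_sq⟩ := hS i
  have hsmall : ∀ a, S i a < ε → ‖Φ a‖ < 1 := fun a ha => by
    simpa [hΦ0] using hball ha
  have hbound : ∀ a, ‖Φ a‖ ≤ S i a :=
    le_of_le_mul_of_sq_le_star_mul_self hS0 hS_sq (fun _ => norm_nonneg _)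
      (norm_sq_le_norm_star_mul_self hΦ_mul hΦ_star)
      (norm_le_inv_mul_of_lt_imp_norm_lt_one hS0 hS_smul hΦ_smul hε hsmall)
  refine ⟨i, hbound, fun Ap _ π hπ_add hπ_smul hπ_mul hπ_star hπ hπ_norm => ?_⟩
  exact exists_star_hom_factor hπ hπ_add hπ_smul hπ_mul hπ_star hΦ_add hΦ_smul hΦ_mul hΦ_star
    (Function.factorsThrough_of_norm_le hΦ_add hπ_add fun a =>
      (hbound a).trans_eq (hπ_norm a).symm)

/-- A continuous *-homomorphism Φ from a locally C*-algebra A (topology given by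
a directed family (S i) of continuous C*-seminorms) into the adjointable operators L_B(E) on
a Hilbert module E over a C*-algebra B is dominated by some seminorm S i, and factors through
the C*-algebra A_i = A/ker (S i) (presented as any C*-algebra Ap with a surjective
*-homomorphism π : A → Ap satisfying ‖π a‖ = S i a) via a *-homomorphism Φp with Φ = Φp ∘ π. -/
theorem stmt7 {A : Type u} [NonUnitalRing A] [StarRing A] [Module ℂ A]
    [TopologicalSpace A]
    {B : Type*} [NonUnitalCStarAlgebra B] [PartialOrder B] [StarOrderedRing B]
    {E : Type*} [NormedAddCommGroup E] [NormedSpace ℂ E] [SMul Bᵐᵒᵖ E] [CStarModuleOld B E]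
    {ι : Type*} (S : ι → A → ℝ)
    (hS : ∀ i, IsCStarSeminorm (S i))
    (hS_cont : ∀ i, Continuous (S i))
    (hS_dir : ∀ i j, ∃ l, ∀ a, S i a ≤ S l a ∧ S j a ≤ S l a)
    -- the topology of A is determined by the family S
    (hS_top : (nhds (0 : A)).HasBasis (fun p : ι × ℝ => 0 < p.2)
      (fun p => {a : A | S p.1 a < p.2}))
    -- Φ : A → L_B(E) is a continuous *-homomorphism
    (Φ : A → E →L[ℂ] E)
    (hΦ_add : ∀ a b : A, Φ (a + b) = Φ a + Φ b)
    (hΦ_smul : ∀ (c : ℂ) (a : A), Φ (c • a) = c • Φ a)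
    (hΦ_mul : ∀ a b : A, Φ (a * b) = (Φ a).comp (Φ b))
    (hΦ_star : ∀ (a : A) (x y : E),
      inner (𝕜 := B) (Φ a x) y = inner (𝕜 := B) x (Φ (star a) y))
    (hΦ_cont : Continuous Φ) :
    ∃ i : ι, (∀ a : A, ‖Φ a‖ ≤ S i a) ∧
      ∀ (Ap : Type u), ∀ (_ : NonUnitalCStarAlgebra Ap), ∀ (π : A → Ap),
        (∀ a b : A, π (a + b) = π a + π b) →
        (∀ (c : ℂ) (a : A), π (c • a) = c • π a) →
        (∀ a b : A, π (a * b) = π a * π b) →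
        (∀ a : A, π (star a) = star (π a)) →
        Function.Surjective π →
        (∀ a : A, ‖π a‖ = S i a) →
        ∃ Φp : Ap → E →L[ℂ] E,
          (∀ x y : Ap, Φp (x + y) = Φp x + Φp y) ∧
          (∀ (c : ℂ) (x : Ap), Φp (c • x) = c • Φp x) ∧
          (∀ x y : Ap, Φp (x * y) = (Φp x).comp (Φp y)) ∧
          (∀ (x : Ap) (ξ η : E),
            inner (𝕜 := B) (Φp x ξ) η = inner (𝕜 := B) ξ (Φp (star x) η)) ∧
          (∀ a : A, Φ a = Φp (π a)) :=
  stmt7_general S hS hS_top Φ hΦ_add hΦ_smul hΦ_mul hΦ_star hΦ_cont
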